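/- arXiv:2403.15866 — 2 statements merged into one kernel-verified Lean document; each statement's English description precedes it below -/
import Mathlib

section
/- Let δ > 0 be sufficiently small (e.g. δ ≤ e^{-3/2}) and let F₁ be as above. Then F₁ is convex on ℝ, F₁(s) ≥ 0 for all s, and F₁'(s)·s ≥ 0 for all s ∈ ℝ. -/
/-!
On `[-δ, δ]` we have `F₁ s = s · negMulLog s`; beyond `±δ`, `F₁` is continued by its second-order
Taylor polynomial, so it is differentiable and on `[0, ∞)` its derivative is `2 negMulLog s - s`
followed by the tangent line of that curve at `δ`. The slope `-2 log s - 3` of that curve is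
nonnegative for `s ≤ e^{-3/2}`, so `F₁'` is monotone on `[0, ∞)`, and, being odd since `F₁` is even,
on all of `ℝ`: `F₁` is convex. As `F₁'(0) = 0`, the minimum of `F₁` is `F₁ 0 = 0`, and `F₁' s` has
the sign of `s`.
-/

open Real Set Filter Topology

theorem HasDerivAt.of_eventuallyEq_nhdsLE_nhdsGE {f g h : ℝ → ℝ} {a f' : ℝ}
    (hg : HasDerivAt g f' a) (hh : HasDerivAt h f' a)
    (hfg : f =ᶠ[𝓝[≤] a] g) (hfh : f =ᶠ[𝓝[≥] a] h) : HasDerivAt f f' a := by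
  have hle := hg.hasDerivWithinAt.congr_of_eventuallyEq hfg (hfg.eq_of_nhdsWithin self_mem_Iic)
  have hge := hh.hasDerivWithinAt.congr_of_eventuallyEq hfh (hfh.eq_of_nhdsWithin self_mem_Ici)
  simpa [Iic_union_Ici] using hle.union hge

theorem Function.Even.differentiableAt_neg_iff {f : ℝ → ℝ} (hf : f.Even) {x : ℝ} :
    DifferentiableAt ℝ f (-x) ↔ DifferentiableAt ℝ f x := by
  rw [← differentiableAt_comp_neg, funext hf]

theorem Function.Even.deriv {f : ℝ → ℝ} (hf : f.Even) : (deriv f).Odd := fun x => by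
  simpa [funext hf] using deriv_comp_neg (f := f) (x := -x)

theorem hasDerivAt_mul_negMulLog (x : ℝ) :
    HasDerivAt (fun y => y * negMulLog y) (2 * negMulLog x - x) x := by
  refine hasDerivAt_of_hasDerivAt_of_ne' (x := 0) (g := fun y => 2 * negMulLog y - y)
    (fun y hy => ?_) (by fun_prop) (by fun_prop) x
  exact ((hasDerivAt_id' y).mul (hasDerivAt_negMulLog hy)).congr_deriv
    (by simp only [negMulLog]; ring)

noncomputable def logTrunc (δ s : ℝ) : ℝ :=
  if |s| < δ then -(1 / 2) * s ^ 2 * log (s ^ 2)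
  else -(1 / 2) * s ^ 2 * (log (δ ^ 2) + 3) + 2 * δ * |s| - δ ^ 2 / 2

-- Only on `[0, ∞)` is this the derivative of `logTrunc δ`.
noncomputable def logTruncDeriv (δ s : ℝ) : ℝ :=
  if s ≤ δ then 2 * negMulLog s - s else -(log (δ ^ 2) + 3) * s + 2 * δ

section logTrunc

variable {δ s : ℝ}

theorem even_logTrunc (δ : ℝ) : (logTrunc δ).Even := fun s => by
  simp only [logTrunc, abs_neg, neg_sq]

theorem logTrunc_of_abs_le (h : |s| ≤ δ) : logTrunc δ s = s * negMulLog s := by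
  rcases h.lt_or_eq with h | rfl
  · rw [logTrunc, if_pos h, negMulLog, log_pow]
    ring
  · rw [logTrunc, if_neg (lt_irrefl _), mul_assoc 2, abs_mul_abs_self, sq_abs, negMulLog,
      log_pow]
    push_cast
    ring

theorem logTrunc_of_le (hδ : 0 ≤ δ) (h : δ ≤ s) :
    logTrunc δ s = -(1 / 2) * s ^ 2 * (log (δ ^ 2) + 3) + 2 * δ * s - δ ^ 2 / 2 := by
  rw [logTrunc, if_neg (by rw [abs_of_nonneg (hδ.trans h)]; exact not_lt.2 h),
    abs_of_nonneg (hδ.trans h)]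

theorem logTruncDeriv_of_le (h : δ ≤ s) :
    logTruncDeriv δ s = -(log (δ ^ 2) + 3) * s + 2 * δ := by
  rw [logTruncDeriv]
  split_ifs with h'
  · obtain rfl := le_antisymm h' h
    rw [negMulLog, log_pow]
    ring
  · rfl

theorem hasDerivAt_logTrunc (hδ : 0 < δ) (hs : 0 ≤ s) :
    HasDerivAt (logTrunc δ) (logTruncDeriv δ s) s := by
  have hquad (x : ℝ) : HasDerivAt (fun y => -(1 / 2) * y ^ 2 * (log (δ ^ 2) + 3) + 2 * δ * y
      - δ ^ 2 / 2) (-(log (δ ^ 2) + 3) * x + 2 * δ) x :=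
    ((((hasDerivAt_pow 2 x).const_mul _).mul_const _).add
      ((hasDerivAt_id' x).const_mul _)).sub_const _ |>.congr_deriv (by ring)
  have hinner : ∀ x ∈ Icc (-δ) δ, logTrunc δ x = x * negMulLog x :=
    fun x hx => logTrunc_of_abs_le (abs_le.2 hx)
  rcases lt_trichotomy s δ with h | rfl | h
  · rw [logTruncDeriv, if_pos h.le]
    refine (hasDerivAt_mul_negMulLog s).congr_of_eventuallyEq ?_
    filter_upwards [Icc_mem_nhds (by linarith : -δ < s) h] using hinner
  · rw [logTruncDeriv_of_le le_rfl]
    refine .of_eventuallyEq_nhdsLE_nhdsGE ((hasDerivAt_mul_negMulLog s).congr_deriv ?_)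
      (hquad s) ?_ ?_
    · rw [negMulLog, log_pow]
      ring
    · filter_upwards [Ioc_mem_nhdsLE (by linarith : -s < s)] with x hx
      exact hinner x (Ioc_subset_Icc_self hx)
    · filter_upwards [self_mem_nhdsWithin] with x hx using logTrunc_of_le hs hx
  · rw [logTruncDeriv_of_le h.le]
    refine (hquad s).congr_of_eventuallyEq ?_
    filter_upwards [Ioi_mem_nhds h] with x hx using logTrunc_of_le hδ.le hx.le

theorem differentiable_logTrunc (hδ : 0 < δ) : Differentiable ℝ (logTrunc δ) := fun s => by
  rcases le_total 0 s with hs | hs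
  · exact (hasDerivAt_logTrunc hδ hs).differentiableAt
  · exact (even_logTrunc δ).differentiableAt_neg_iff.1
      (hasDerivAt_logTrunc hδ (neg_nonneg.2 hs)).differentiableAt

theorem monotoneOn_logTruncDeriv (hδ : 0 < δ) (hδ' : δ ≤ exp (-(3 / 2))) :
    MonotoneOn (logTruncDeriv δ) (Ici 0) := by
  have hlogδ : log δ ≤ -(3 / 2) := (log_le_iff_le_exp hδ).2 hδ'
  have hinner : MonotoneOn (logTruncDeriv δ) (Icc 0 δ) := by
    refine MonotoneOn.congr ?_ fun x hx => (if_pos hx.2).symm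
    refine monotoneOn_of_hasDerivWithinAt_nonneg (f' := fun x => -2 * log x - 3) (convex_Icc 0 δ)
      (by fun_prop) (fun x hx => ?_) (fun x hx => ?_) <;> rw [interior_Icc] at hx
    · exact (((hasDerivAt_negMulLog hx.1.ne').const_mul 2).sub (hasDerivAt_id' x)).congr_deriv
        (by ring) |>.hasDerivWithinAt
    · linarith [log_le_log hx.1 hx.2.le]
  have houter : MonotoneOn (logTruncDeriv δ) (Ici δ) := fun a ha b hb hab => by
    rw [logTruncDeriv_of_le ha, logTruncDeriv_of_le hb, log_pow]
    push_cast
    nlinarith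
  simpa [Icc_union_Ici_eq_Ici hδ.le] using
    hinner.union_right houter (isGreatest_Icc hδ.le) isLeast_Ici

theorem monotone_deriv_logTrunc (hδ : 0 < δ) (hδ' : δ ≤ exp (-(3 / 2))) :
    Monotone (deriv (logTrunc δ)) :=
  monotone_of_odd_of_monotoneOn_nonneg (even_logTrunc δ).deriv <|
    (monotoneOn_logTruncDeriv hδ hδ').congr fun _ hs => (hasDerivAt_logTrunc hδ hs).deriv.symm

end logTrunc

/-- For `δ > 0` sufficiently small (`δ ≤ e^{-3/2}`), the truncation `F₁` is
convex, nonnegative, and satisfies `F₁'(s)·s ≥ 0` for all `s`. -/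
theorem stmt_8 (δ : ℝ) (hδ : 0 < δ) (hδ' : δ ≤ Real.exp (-(3 / 2))) (F : ℝ → ℝ)
    (h0 : F 0 = 0)
    (h1 : ∀ s : ℝ, s ≠ 0 → |s| < δ → F s = -(1 / 2) * s ^ 2 * Real.log (s ^ 2))
    (h2 : ∀ s : ℝ, δ ≤ |s| →
      F s = -(1 / 2) * s ^ 2 * (Real.log (δ ^ 2) + 3) + 2 * δ * |s| - δ ^ 2 / 2) :
    ConvexOn ℝ Set.univ F ∧ (∀ s : ℝ, 0 ≤ F s) ∧ ∀ s : ℝ, 0 ≤ deriv F s * s := by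
  obtain rfl : F = logTrunc δ := by
    funext s
    unfold logTrunc
    split_ifs with hs
    · rcases eq_or_ne s 0 with rfl | hs0
      · simp [h0]
      · exact h1 s hs0 hs
    · exact h2 s (not_lt.1 hs)
  have hmono := monotone_deriv_logTrunc hδ hδ'
  have hdiff := differentiable_logTrunc hδ
  have hconv := hmono.convexOn_univ_of_deriv hdiff
  have hderiv0 : deriv (logTrunc δ) 0 = 0 := (even_logTrunc δ).deriv.map_zero
  refine ⟨hconv, fun s => ?_, fun s => ?_⟩
  · have hmin : IsMinOn (logTrunc δ) univ 0 := by
      refine hconv.isMinOn_of_rightDeriv_eq_zero (by simp) ?_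
      rw [(hdiff 0).hasDerivAt.hasDerivWithinAt.derivWithin (uniqueDiffWithinAt_Ioi 0), hderiv0]
    simpa [logTrunc, hδ] using hmin (mem_univ s)
  · rcases le_total 0 s with hs | hs
    · exact mul_nonneg (hderiv0 ▸ hmono hs) hs
    · exact mul_nonneg_of_nonpos_of_nonpos (hderiv0 ▸ hmono hs) hs
end

section
/- Let V : ℤ^N → ℝ be bounded with −1 < inf V, and let (u_n) ⊂ ℓ²(ℤ^N) be a sequence such that J(u_n) ≤ C for all n and ⟨J'(u_n), u_n⟩ = o(‖u_n‖), where J is the logarithmic Schrödinger energy functional. Then using the identity ‖u_n‖₂² = 2J(u_n) − ⟨J'(u_n), u_n⟩, the sequence (u_n) is bounded in ℓ²(ℤ^N) (and hence in H¹(ℤ^N)). -/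
lemma abs_tsum_le' {ι : Type*} (f : ι → ℝ) (hf : Summable fun i => |f i|) :
    |∑' i, f i| ≤ ∑' i, |f i| := by
  have h := norm_tsum_le_tsum_norm (f := f) (by simpa using hf)
  simpa using h

lemma mul_log_le_sq {t : ℝ} (ht : 0 ≤ t) : t * Real.log t ≤ t ^ 2 := by
  rcases eq_or_lt_of_le ht with h | h
  · simp [← h]
  · have := Real.log_le_sub_one_of_pos h
    nlinarith

/-- Boundedness of Palais–Smale-type sequences for the logarithmic
Schrödinger functional on `ℤ^N` with a bounded potential `V` satisfying
`-1 < inf V`: if `J(uₙ) ≤ C₀` and `⟨J'(uₙ), uₙ⟩ = o(‖uₙ‖₂)`, then (via the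
identity `‖uₙ‖₂² = 2J(uₙ) − ⟨J'(uₙ), uₙ⟩`) the sequence `(uₙ)` is bounded in
`ℓ²(ℤ^N)`, hence in `H¹(ℤ^N)`. -/
theorem stmt_15 (N : ℕ) (hN : 0 < N) (Vp : (Fin N → ℤ) → ℝ) (m M₀ : ℝ)
    (hm : -1 < m) (hVb : ∀ x, m ≤ Vp x ∧ Vp x ≤ M₀)
    (u : ℕ → (Fin N → ℤ) → ℝ)
    (g : ℕ → (Fin N → ℤ) → ℝ)
    (hg : ∀ n x, g n x = (1 / 2) * ∑ i : Fin N,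
      ((u n (x + Pi.single i 1) - u n x) ^ 2 +
       (u n (x - Pi.single i 1) - u n x) ^ 2))
    (hsum2 : ∀ n, Summable (fun x => u n x ^ 2))
    (hsumg : ∀ n, Summable (fun x => g n x))
    (hsuml : ∀ n, Summable (fun x => u n x ^ 2 * Real.log (u n x ^ 2)))
    (J P : ℕ → ℝ)
    (hJ : ∀ n, J n = (1 / 2) * (∑' x, (g n x + (Vp x + 1) * u n x ^ 2))
        - (1 / 2) * ∑' x, u n x ^ 2 * Real.log (u n x ^ 2))
    (hP : ∀ n, P n = (∑' x, (g n x + Vp x * u n x ^ 2))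
        - ∑' x, u n x ^ 2 * Real.log (u n x ^ 2))
    (C₀ : ℝ) (hJb : ∀ n, J n ≤ C₀)
    (ε : ℕ → ℝ) (hε0 : ∀ n, 0 ≤ ε n)
    (hε : Filter.Tendsto ε Filter.atTop (nhds 0))
    (hPsmall : ∀ n, |P n| ≤ ε n * Real.sqrt (∑' x, u n x ^ 2)) :
    (∀ n, ∑' x, u n x ^ 2 = 2 * J n - P n) ∧
    (∃ K : ℝ, ∀ n, Real.sqrt (∑' x, u n x ^ 2) ≤ K) ∧
    (∃ K : ℝ, ∀ n, Real.sqrt ((∑' x, g n x) + ∑' x, u n x ^ 2) ≤ K) := by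
  set B : ℝ := max |m| |M₀| with hB
  have hB0 : 0 ≤ B := le_trans (abs_nonneg m) (le_max_left _ _)
  have hVabs : ∀ x, |Vp x| ≤ B := by
    intro x
    rcases hVb x with ⟨h1, h2⟩
    rw [abs_le]
    constructor
    · have : -|m| ≤ m := neg_abs_le m
      linarith [le_max_left |m| |M₀|]
    · have : M₀ ≤ |M₀| := le_abs_self M₀
      linarith [le_max_right |m| |M₀|]
  -- summability of V u²
  have hVS : ∀ n, Summable (fun x => Vp x * u n x ^ 2) := by
    intro n
    apply Summable.of_abs
    apply Summable.of_nonneg_of_le (fun x => abs_nonneg _)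
      (fun x => ?_) ((hsum2 n).mul_left B)
    rw [abs_mul, abs_of_nonneg (sq_nonneg (u n x))]
    exact mul_le_mul_of_nonneg_right (hVabs x) (sq_nonneg _)
  -- the splitting of the first tsum
  have hsplit : ∀ n, (∑' x, (g n x + (Vp x + 1) * u n x ^ 2))
      = (∑' x, (g n x + Vp x * u n x ^ 2)) + ∑' x, u n x ^ 2 := by
    intro n
    have : (fun x => g n x + (Vp x + 1) * u n x ^ 2)
        = fun x => (g n x + Vp x * u n x ^ 2) + u n x ^ 2 := by
      funext x; ring
    rw [this]
    exact Summable.tsum_add ((hsumg n).add (hVS n)) (hsum2 n)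
  -- Part 1: the identity
  have hId : ∀ n, ∑' x, u n x ^ 2 = 2 * J n - P n := by
    intro n
    rw [hJ n, hP n, hsplit n]
    ring
  refine ⟨hId, ?_⟩
  -- nonnegativity of S and sqrt facts
  set S : ℕ → ℝ := fun n => ∑' x, u n x ^ 2 with hSdef
  have hS0 : ∀ n, 0 ≤ S n := fun n => tsum_nonneg fun x => sq_nonneg _
  have hsq : ∀ n, Real.sqrt (S n) ^ 2 = S n := fun n => Real.sq_sqrt (hS0 n)
  -- bound on ε
  obtain ⟨E, hE⟩ : ∃ E, ∀ n, ε n ≤ E := by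
    obtain ⟨E, hE⟩ := hε.bddAbove_range
    exact ⟨E, fun n => hE ⟨n, rfl⟩⟩
  have hE0 : 0 ≤ E := le_trans (hε0 0) (hE 0)
  -- Part 2
  have hK : ∀ n, Real.sqrt (S n) ≤ |2 * C₀| + E + 1 := by
    intro n
    set a := Real.sqrt (S n) with ha
    have ha0 : 0 ≤ a := Real.sqrt_nonneg _
    have h1 : a ^ 2 ≤ 2 * C₀ + E * a := by
      have := hId n
      have hPb : -P n ≤ ε n * a := by
        have := hPsmall n; rw [abs_le] at this; linarith [this.1]
      have hεa : ε n * a ≤ E * a := mul_le_mul_of_nonneg_right (hE n) ha0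
      have hJn := hJb n
      rw [hsq n]
      calc S n = 2 * J n - P n := hId n
        _ ≤ 2 * C₀ + ε n * a := by linarith
        _ ≤ 2 * C₀ + E * a := by linarith
    nlinarith [abs_nonneg (2 * C₀), le_abs_self (2 * C₀), mul_nonneg ha0 ha0,
      mul_nonneg hE0 ha0]
  refine ⟨⟨|2 * C₀| + E + 1, hK⟩, ?_⟩
  set K : ℝ := |2 * C₀| + E + 1 with hKdef
  have hK0 : 0 ≤ K := le_trans (Real.sqrt_nonneg (S 0)) (hK 0)
  have hSK : ∀ n, S n ≤ K ^ 2 := by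
    intro n
    rw [← hsq n]
    exact pow_le_pow_left₀ (Real.sqrt_nonneg _) (hK n) 2
  -- bound on the log term: L n ≤ S n ^ 2
  have hL : ∀ n, (∑' x, u n x ^ 2 * Real.log (u n x ^ 2)) ≤ S n ^ 2 := by
    intro n
    have hterm : ∀ x, u n x ^ 2 ≤ S n := fun x =>
      Summable.le_tsum (hsum2 n) x fun _ _ => sq_nonneg _
    have hsum4 : Summable (fun x => u n x ^ 2 * u n x ^ 2) := by
      apply Summable.of_nonneg_of_le (fun x => mul_nonneg (sq_nonneg _) (sq_nonneg _))
        (fun x => ?_) ((hsum2 n).mul_left (S n))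
      exact mul_le_mul_of_nonneg_right (hterm x) (sq_nonneg _)
    calc (∑' x, u n x ^ 2 * Real.log (u n x ^ 2))
        ≤ ∑' x, u n x ^ 2 * u n x ^ 2 := by
          apply Summable.tsum_le_tsum (fun x => ?_) (hsuml n) hsum4
          have := mul_log_le_sq (sq_nonneg (u n x))
          nlinarith [this]
      _ ≤ ∑' x, S n * u n x ^ 2 := by
          apply Summable.tsum_le_tsum (fun x => ?_) hsum4 ((hsum2 n).mul_left (S n))
          exact mul_le_mul_of_nonneg_right (hterm x) (sq_nonneg _)
      _ = S n ^ 2 := by rw [tsum_mul_left]; ring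
  -- bound on |∑' V u²|
  have hVSb : ∀ n, |∑' x, Vp x * u n x ^ 2| ≤ B * S n := by
    intro n
    calc |∑' x, Vp x * u n x ^ 2| ≤ ∑' x, |Vp x * u n x ^ 2| := by
          exact abs_tsum_le' _ (hVS n).abs
      _ ≤ ∑' x, B * u n x ^ 2 := by
          apply Summable.tsum_le_tsum (fun x => ?_) (hVS n).abs ((hsum2 n).mul_left B)
          rw [abs_mul, abs_of_nonneg (sq_nonneg (u n x))]
          exact mul_le_mul_of_nonneg_right (hVabs x) (sq_nonneg _)
      _ = B * S n := tsum_mul_left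
  -- Part 3
  have hGsum : ∀ n, (∑' x, g n x) + S n ≤ 2 * C₀ + B * K ^ 2 + K ^ 4 := by
    intro n
    -- G = 2J - ∑'Vu² - S + L, so G + S = 2J - ∑'Vu² + L
    have hGid : (∑' x, g n x) + S n = 2 * J n - (∑' x, Vp x * u n x ^ 2)
        + (∑' x, u n x ^ 2 * Real.log (u n x ^ 2)) := by
      have h2 : (∑' x, (g n x + Vp x * u n x ^ 2))
          = (∑' x, g n x) + ∑' x, Vp x * u n x ^ 2 :=
        Summable.tsum_add (hsumg n) (hVS n)
      rw [hJ n, hsplit n, h2]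
      ring
    have h3 : -(∑' x, Vp x * u n x ^ 2) ≤ B * S n := by
      have := hVSb n; rw [abs_le] at this; linarith [this.1]
    have h4 := hL n
    have h5 := hSK n
    have h6 : S n ^ 2 ≤ (K ^ 2) ^ 2 :=
      pow_le_pow_left₀ (hS0 n) h5 2
    have h7 : B * S n ≤ B * K ^ 2 := mul_le_mul_of_nonneg_left h5 hB0
    rw [hGid]
    have := hJb n
    nlinarith
  refine ⟨Real.sqrt (2 * C₀ + B * K ^ 2 + K ^ 4), fun n => ?_⟩
  exact Real.sqrt_le_sqrt (hGsum n)
end
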